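/- Let (Q, ρ, σ, τ) be a string algebra datum with sign maps and let v ∈ Q₀. Then the left hammock linear order (H_l(v), <_l) is order-isomorphic to the linguage 𝐋(M) of some deterministic finite automaton M over {0,1}. -/

import Mathlib

/-- A deterministic finite automaton with a partial transition function. -/
structure PDFA (σ : Type) where
  /-- the (finite) set of states -/
  State : Type
  finState : Finite State
  /-- the start state -/
  start : State
  /-- the set of accept states -/
  accept : Set State
  /-- the partial transition function -/
  step : State → σ → Option State

namespace PDFA

variable {σ : Type} (M : PDFA σ)

/-- The extended (partial) transition function `δ̂`, reading the word left to right. -/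
def run (q : M.State) (w : List σ) : Option M.State :=
  w.foldlM (fun q a => M.step q a) q

/-- The language accepted by the automaton. -/
def lang : Set (List σ) := {w | ∃ q ∈ M.accept, M.run M.start w = some q}

end PDFA

/-- The inorder relation `<₂` on finite binary words: `x <₂ y` iff, writing
`x = w·x'`, `y = w·y'` with `w` the longest common prefix, either `x'` begins
with `0`(=`false`) or `y'` begins with `1`(=`true`). -/
def inlt : List Bool → List Bool → Prop
  | [], [] => False
  | [], b :: _ => b = true
  | a :: _, [] => a = false
  | a :: x, b :: y => (a = false ∧ b = true) ∨ (a = b ∧ inlt x y)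

/-- A string algebra datum: a finite quiver together with a finite nonempty set `ρ`
of blocking paths of length at least 2, satisfying the string algebra conditions. -/
structure StringAlgData where
  /-- the vertices -/
  V : Type
  /-- the arrows -/
  A : Type
  finV : Finite V
  finA : Finite A
  src : A → V
  tgt : A → V
  /-- the blocking relations: a finite set of paths, recorded as lists of arrows
  `[α₁, …, αₙ]` (read right to left, i.e. `s αᵢ = t αᵢ₊₁`) -/
  ρ : Finset (List A)
  ρ_ne : ρ.Nonempty
  ρ_len : ∀ p ∈ ρ, 2 ≤ p.length
  ρ_path : ∀ p ∈ ρ, p.Chain' (fun a b => src a = tgt b)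
  /-- at most two arrows out of any vertex -/
  two_out : ∀ (v : V) (a b c : A), src a = v → src b = v → src c = v → a = b ∨ a = c ∨ b = c
  /-- at most two arrows into any vertex -/
  two_in : ∀ (v : V) (a b c : A), tgt a = v → tgt b = v → tgt c = v → a = b ∨ a = c ∨ b = c
  /-- for every arrow `b`, at most one arrow `a` with `ab ∉ ρ` -/
  unblocked_left : ∀ b a a' : A, src a = tgt b → src a' = tgt b →
    [a, b] ∉ ρ → [a', b] ∉ ρ → a = a'
  /-- for every arrow `b`, at most one arrow `c` with `bc ∉ ρ` -/
  unblocked_right : ∀ b c c' : A, src b = tgt c → src b = tgt c' →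
    [b, c] ∉ ρ → [b, c'] ∉ ρ → c = c'

namespace StringAlgData

variable (D : StringAlgData)

/-- Syllables: direct syllables (`Sum.inl`) and inverse syllables (`Sum.inr`). -/
abbrev Syll := D.A ⊕ D.A

/-- The source of a syllable. -/
def sylSrc : D.Syll → D.V
  | .inl a => D.src a
  | .inr a => D.tgt a

/-- The target of a syllable. -/
def sylTgt : D.Syll → D.V
  | .inl a => D.tgt a
  | .inr a => D.src a

/-- The inverse of a syllable. -/
def sylInv : D.Syll → D.Syll
  | .inl a => .inr a
  | .inr a => .inl a

/-- A walk: a nonempty word `α₁⋯αₙ` over the syllables (stored as the list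
`[α₁, …, αₙ]`) with `s(αᵢ) = t(αᵢ₊₁)` for all `i`. -/
def IsWalk (w : List D.Syll) : Prop :=
  w ≠ [] ∧ w.Chain' (fun α β => D.sylSrc α = D.sylTgt β)

/-- A (nonempty) string: a walk none of whose factors, nor inverse of a factor,
lies in `ρ`, and without a syllable immediately followed by its inverse. -/
def IsString (w : List D.Syll) : Prop :=
  D.IsWalk w ∧
  (∀ p ∈ D.ρ, ¬ (p.map (Sum.inl : D.A → D.Syll)) <:+: w ∧
    ¬ ((p.map (Sum.inr : D.A → D.Syll)).reverse) <:+: w) ∧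
  w.Chain' (fun α β => α ≠ D.sylInv β)

/-- The bit associated to a syllable: `0`(=`false`) for direct, `1`(=`true`) for inverse. -/
def sylBit : D.Syll → Bool
  | .inl _ => false
  | .inr _ => true

/-- The sign sequence of a string in `H_l(v)`: `sgn(1) = ε`, `sgn(α𝔶) = sgn(𝔶)·0` for a
direct syllable `α` and `sgn(α𝔶) = sgn(𝔶)·1` for an inverse syllable `α`. -/
def sgn : List D.Syll → List Bool
  | [] => []
  | α :: y => sgn y ++ [D.sylBit α]

/-- The value of the extended `σ`-map on a syllable, given sign maps `sgm`, `tau` on arrows. -/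
def sylSgm (sgm tau : D.A → ℤ) : D.Syll → ℤ
  | .inl a => sgm a
  | .inr a => tau a

/-- Membership in the left hammock `H_l(v)`: the zero-length string `1_{(v,1)}`
(recorded as the empty list) together with all nonempty strings `𝔵` with
`s(𝔵) = v` and `σ(𝔵) = -1`. -/
def InHl (sgm tau : D.A → ℤ) (v : D.V) (w : List D.Syll) : Prop :=
  w = [] ∨ (D.IsString w ∧ ∃ α, w.getLast? = some α ∧ D.sylSrc α = v ∧ D.sylSgm sgm tau α = -1)

/-- The hammock order `<_l`: for `𝔵 = 𝔵'𝔴`, `𝔶 = 𝔶'𝔴` with `𝔴` the longest common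
suffix, `𝔵 <_l 𝔶` iff the rightmost syllable of `𝔵'` is direct or the rightmost
syllable of `𝔶'` is inverse. -/
def ltl (x y : List D.Syll) : Prop :=
  ∃ w x' y', x = x' ++ w ∧ y = y' ++ w ∧
    (∀ α, ¬ (x'.getLast? = some α ∧ y'.getLast? = some α)) ∧
    ((∃ a, x'.getLast? = some (Sum.inl a)) ∨ (∃ a, y'.getLast? = some (Sum.inr a)))

end StringAlgData

/-! A string of `H_l(v)` is grown leftwards from `v` one syllable at a time. Whether a
syllable may be prepended depends only on the last `maxRelLength` syllables, and by the
sign conditions at a vertex and the string algebra axioms at most one direct and at most one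
inverse syllable qualify. Hence a string is determined by its sign sequence, the sign
sequences are the language of an automaton whose states are these windows, and comparing two
strings at their longest common suffix is comparing their sign sequences at their first
difference. -/

theorem Set.BijOn.nonempty_relIso {α β : Type*} {r : α → α → Prop} {s : β → β → Prop}
    {A : Set α} {B : Set β} {f : α → β} (hf : Set.BijOn f A B)
    (htotal : ∀ x ∈ A, ∀ y ∈ A, x ≠ y → r x y ∨ r y x) (hasymm : ∀ x y, s x y → ¬ s y x)
    (hmono : ∀ x ∈ A, ∀ y ∈ A, r x y → s (f x) (f y)) :
    Nonempty ((fun x y : A => r x y) ≃r fun x y : B => s x y) := by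
  refine ⟨⟨hf.equiv f, fun {x y} => ⟨fun hxy => ?_, hmono x x.2 y y.2⟩⟩⟩
  rcases eq_or_ne x y with rfl | hne
  · exact absurd hxy (hasymm _ _ hxy)
  · exact (htotal x x.2 y y.2 (Subtype.coe_ne_coe.mpr hne)).resolve_right
      fun hyx => hasymm _ _ hxy (hmono y y.2 x x.2 hyx)

theorem inlt_append_left_iff (u x y : List Bool) : inlt (u ++ x) (u ++ y) ↔ inlt x y := by
  induction u with
  | nil => rfl
  | cons a u ih => simp [inlt, ih]

theorem inlt_asymm {x y : List Bool} (h : inlt x y) : ¬ inlt y x := by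
  induction x generalizing y with
  | nil => cases y <;> simp_all [inlt]
  | cons a x ih =>
    cases y with
    | nil => cases a <;> simp_all [inlt]
    | cons b y =>
      rcases h with ⟨rfl, rfl⟩ | ⟨rfl, h⟩
      · simp [inlt]
      · simp [inlt, ih h]

theorem List.exists_longest_common_suffix {γ : Type*} (x y : List γ) :
    ∃ w x' y', x = x' ++ w ∧ y = y' ++ w ∧
      ∀ α, ¬ (x'.getLast? = some α ∧ y'.getLast? = some α) := by
  induction x using List.reverseRecOn generalizing y with
  | nil => exact ⟨[], [], y, rfl, by simp, by simp⟩
  | append_singleton x a ih =>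
    by_cases hy : y.getLast? = some a
    · obtain ⟨w, x', y', hx, hy', hlast⟩ := ih y.dropLast
      refine ⟨w ++ [a], x', y', by simp [hx], ?_, hlast⟩
      rw [← List.dropLast_append_getLast? a hy, hy', List.append_assoc]
    · exact ⟨[], x ++ [a], y, by simp, by simp, by simp +contextual [hy]⟩

theorem List.take_cons_take {γ : Type*} (n : ℕ) (a : γ) (l : List γ) :
    (a :: l.take n).take n = (a :: l).take n := by
  cases n <;> simp [List.take_take]

theorem PDFA.run_append_singleton {β : Type} (M : PDFA β) (q : M.State) (x : List β) (b : β) :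
    M.run q (x ++ [b]) = (M.run q x).bind fun q' => M.step q' b := by
  simp [PDFA.run, List.foldlM_append]

section WindowAutomaton

variable {Γ β : Type} (P : List Γ → Γ → Prop) (f : Γ → β)

def IsBuilt : List Γ → Prop
  | [] => True
  | α :: t => P t α ∧ IsBuilt t

variable {P} in
theorem IsBuilt.of_append {u t : List Γ} (h : IsBuilt P (u ++ t)) : IsBuilt P t := by
  induction u with
  | nil => exact h
  | cons a u ih => exact ih h.2

theorem injOn_isBuilt (hdet : ∀ t α α', P t α → P t α' → f α = f α' → α = α') :
    Set.InjOn (fun w => (w.map f).reverse) {w | IsBuilt P w} := by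
  intro w hw w' hw' h
  induction w generalizing w' with
  | nil => simpa using h.symm
  | cons α t ih =>
    cases w' with
    | nil => simp at h
    | cons α' t' =>
      simp only [List.map_cons, List.reverse_cons] at h
      obtain ⟨ht, hα⟩ := List.append_inj' h rfl
      obtain rfl := ih hw.2 hw'.2 ht
      rw [hdet t α α' hw.1 hw'.1 (by simpa using hα)]

open Classical in
noncomputable abbrev windowAutomaton [Finite Γ] (K : ℕ) : PDFA β where
  State := {l : List Γ // l.length ≤ K}
  finState := (List.finite_length_le Γ K).to_subtype
  start := ⟨[], by simp⟩
  accept := Set.univ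
  step s b :=
    if h : ∃ α, f α = b ∧ P s.1 α then some ⟨(h.choose :: s.1).take K, by simp⟩ else none

variable [Finite Γ] {K : ℕ}

theorem windowAutomaton_step_eq_some
    (hdet : ∀ t α α', P t α → P t α' → f α = f α' → α = α')
    {s : (windowAutomaton P f K).State} {α : Γ} (hα : P s.1 α) :
    (windowAutomaton P f K).step s (f α) = some ⟨(α :: s.1).take K, by simp⟩ := by
  have h : ∃ α', f α' = f α ∧ P s.1 α' := ⟨α, rfl, hα⟩
  simp only [windowAutomaton, dif_pos h,
    hdet _ _ _ h.choose_spec.2 hα h.choose_spec.1]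

theorem exists_of_windowAutomaton_step_eq_some {s s' : (windowAutomaton P f K).State} {b : β}
    (h : (windowAutomaton P f K).step s b = some s') :
    ∃ α, f α = b ∧ P s.1 α ∧ s'.1 = (α :: s.1).take K := by
  simp only [windowAutomaton] at h
  split_ifs at h with hex
  cases h
  exact ⟨hex.choose, hex.choose_spec.1, hex.choose_spec.2, rfl⟩

theorem windowAutomaton_run_of_isBuilt
    (hdet : ∀ t α α', P t α → P t α' → f α = f α' → α = α')
    (hloc : ∀ t α, P (t.take K) α ↔ P t α) {w : List Γ} (hw : IsBuilt P w) :
    (windowAutomaton P f K).run (windowAutomaton P f K).start (w.map f).reverse =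
      some ⟨w.take K, by simp⟩ := by
  induction w with
  | nil => simp [PDFA.run]
  | cons α t ih =>
    rw [List.map_cons, List.reverse_cons, PDFA.run_append_singleton, ih hw.2, Option.bind_some,
      windowAutomaton_step_eq_some P f hdet ((hloc t α).mpr hw.1)]
    simp only [List.take_cons_take]

theorem exists_isBuilt_of_windowAutomaton_run (hloc : ∀ t α, P (t.take K) α ↔ P t α)
    {x : List β} {s : (windowAutomaton P f K).State}
    (h : (windowAutomaton P f K).run (windowAutomaton P f K).start x = some s) :
    ∃ w, IsBuilt P w ∧ (w.map f).reverse = x ∧ s.1 = w.take K := by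
  induction x using List.reverseRecOn generalizing s with
  | nil =>
    cases h
    exact ⟨[], trivial, rfl, by simp⟩
  | append_singleton x b ih =>
    rw [PDFA.run_append_singleton, Option.bind_eq_some_iff] at h
    obtain ⟨s', hs', hstep⟩ := h
    obtain ⟨w, hw, rfl, hs'w⟩ := ih hs'
    obtain ⟨α, rfl, hα, hs⟩ := exists_of_windowAutomaton_step_eq_some P f hstep
    rw [hs'w, hloc] at hα
    exact ⟨α :: w, ⟨hα, hw⟩, by simp, by rw [hs, hs'w, List.take_cons_take]⟩

theorem bijOn_isBuilt_lang_windowAutomaton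
    (hdet : ∀ t α α', P t α → P t α' → f α = f α' → α = α')
    (hloc : ∀ t α, P (t.take K) α ↔ P t α) :
    Set.BijOn (fun w => (w.map f).reverse) {w | IsBuilt P w} (windowAutomaton P f K).lang := by
  refine ⟨fun w hw => ⟨_, trivial, windowAutomaton_run_of_isBuilt P f hdet hloc hw⟩,
    injOn_isBuilt P f hdet, fun x ⟨s, _, hs⟩ => ?_⟩
  obtain ⟨w, hw, hx, -⟩ := exists_isBuilt_of_windowAutomaton_run P f hloc hs
  exact ⟨w, hw, hx⟩

end WindowAutomaton

namespace StringAlgData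

variable (D : StringAlgData)

instance : Finite D.A := D.finA

def maxRelLength : ℕ := D.ρ.sup List.length

theorem one_le_maxRelLength : 1 ≤ D.maxRelLength := by
  obtain ⟨p, hp⟩ := D.ρ_ne
  exact le_trans (by linarith [D.ρ_len p hp]) (Finset.le_sup (f := List.length) hp)

theorem eq_of_src_eq_of_ne {a a' c : D.A} (ha : D.src a = D.src c) (ha' : D.src a' = D.src c)
    (hac : a ≠ c) (ha'c : a' ≠ c) : a = a' :=
  (D.two_out _ a a' c ha ha' rfl).resolve_right (by tauto)

theorem eq_of_tgt_eq_of_ne {a a' c : D.A} (ha : D.tgt a = D.tgt c) (ha' : D.tgt a' = D.tgt c)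
    (hac : a ≠ c) (ha'c : a' ≠ c) : a = a' :=
  (D.two_in _ a a' c ha ha' rfl).resolve_right (by tauto)

def NoRelationPrefix (w : List D.Syll) : Prop :=
  ∀ p ∈ D.ρ, ¬ (p.map (Sum.inl : D.A → D.Syll)) <+: w ∧
    ¬ ((p.map (Sum.inr : D.A → D.Syll)).reverse) <+: w

theorem noRelationPrefix_take_iff {n : ℕ} (hn : D.maxRelLength ≤ n) (w : List D.Syll) :
    D.NoRelationPrefix (w.take n) ↔ D.NoRelationPrefix w := by
  have hlen {p} (hp : p ∈ D.ρ) : p.length ≤ n :=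
    (Finset.le_sup (f := List.length) hp).trans hn
  simp +contextual only [NoRelationPrefix, List.prefix_take_iff, List.length_reverse,
    List.length_map, hlen, and_true]

theorem noRelationPrefix_singleton (α : D.Syll) : D.NoRelationPrefix [α] := fun p hp => by
  have := D.ρ_len p hp
  constructor <;> intro h <;> have := h.length_le <;> simp at this <;> omega

theorem isString_singleton (α : D.Syll) : D.IsString [α] :=
  ⟨⟨by simp, List.isChain_singleton _⟩, fun p hp => by
    have := D.ρ_len p hp
    constructor <;> intro h <;> have := h.length_le <;> simp at this <;> omega,
    List.isChain_singleton _⟩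

set_option linter.deprecated false in
theorem isString_cons_cons_iff (α β : D.Syll) (t : List D.Syll) :
    D.IsString (α :: β :: t) ↔ D.IsString (β :: t) ∧
      (D.sylSrc α = D.sylTgt β ∧ α ≠ D.sylInv β) ∧ D.NoRelationPrefix (α :: β :: t) := by
  simp only [IsString, IsWalk, NoRelationPrefix, List.Chain', List.isChain_cons_cons,
    List.infix_cons_iff (l₂ := β :: t), not_or, imp_and, forall_and]
  tauto

variable (sgm tau : D.A → ℤ) (v : D.V)

def HeadOK : List D.Syll → D.Syll → Prop
  | [], α => D.sylSrc α = v ∧ D.sylSgm sgm tau α = -1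
  | β :: _, α => D.sylSrc α = D.sylTgt β ∧ α ≠ D.sylInv β

def Extends (t : List D.Syll) (α : D.Syll) : Prop :=
  D.HeadOK sgm tau v t α ∧ D.NoRelationPrefix (α :: t)

theorem headOK_take_iff {n : ℕ} (hn : 1 ≤ n) (t : List D.Syll) (α : D.Syll) :
    D.HeadOK sgm tau v (t.take n) α ↔ D.HeadOK sgm tau v t α := by
  obtain ⟨k, rfl⟩ := Nat.exists_eq_add_of_le' hn
  cases t <;> rfl

theorem extends_take_iff (t : List D.Syll) (α : D.Syll) :
    D.Extends sgm tau v (t.take D.maxRelLength) α ↔ D.Extends sgm tau v t α := by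
  rw [Extends, Extends, D.headOK_take_iff sgm tau v D.one_le_maxRelLength, ← List.take_succ_cons,
    D.noRelationPrefix_take_iff (Nat.le_succ _)]

theorem inHl_cons_iff (t : List D.Syll) (α : D.Syll) :
    D.InHl sgm tau v (α :: t) ↔ D.InHl sgm tau v t ∧ D.Extends sgm tau v t α := by
  rcases t with _ | ⟨β, t⟩
  · simp [InHl, Extends, HeadOK, isString_singleton, noRelationPrefix_singleton]
  · simp only [InHl, Extends, HeadOK, isString_cons_cons_iff, List.getLast?_cons_cons,
      reduceCtorEq, false_or]
    tauto

theorem inHl_iff_isBuilt (w : List D.Syll) :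
    D.InHl sgm tau v w ↔ IsBuilt (D.Extends sgm tau v) w := by
  induction w with
  | nil => exact iff_of_true (Or.inl rfl) trivial
  | cons α t ih => rw [inHl_cons_iff, ih, IsBuilt, and_comm]

variable {D sgm tau v}

theorem InHl.extends_of_append {u t : List D.Syll} {α : D.Syll}
    (h : D.InHl sgm tau v (u ++ α :: t)) : D.Extends sgm tau v t α := by
  rw [inHl_iff_isBuilt] at h
  exact h.of_append.1

theorem Extends.eq_of_sylBit_eq
    (hsrc : ∀ a b, a ≠ b → D.src a = D.src b → sgm a = -sgm b)
    (htgt : ∀ a b, a ≠ b → D.tgt a = D.tgt b → tau a = -tau b)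
    {t : List D.Syll} {α α' : D.Syll} (h : D.Extends sgm tau v t α)
    (h' : D.Extends sgm tau v t α') (hbit : D.sylBit α = D.sylBit α') : α = α' := by
  obtain ⟨hhead, hrel⟩ := h
  obtain ⟨hhead', hrel'⟩ := h'
  rcases t with _ | ⟨β, t⟩
  · obtain ⟨hv, hσ⟩ := hhead
    obtain ⟨hv', hσ'⟩ := hhead'
    rcases α with a | a <;> rcases α' with a' | a' <;> cases hbit <;> congr 1 <;> by_contra hne <;>
      simp only [sylSgm] at hσ hσ'
    · have := hsrc a a' hne (hv.trans hv'.symm)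
      omega
    · have := htgt a a' hne (hv.trans hv'.symm)
      omega
  · rcases α with a | a <;> rcases α' with a' | a' <;> cases hbit <;> rcases β with b | b <;>
      congr 1
    · exact D.unblocked_left b a a' hhead.1 hhead'.1 (fun hm => (hrel _ hm).1 ⟨t, rfl⟩)
        fun hm => (hrel' _ hm).1 ⟨t, rfl⟩
    · exact D.eq_of_src_eq_of_ne hhead.1 hhead'.1 (fun hab => hhead.2 (by rw [hab]; rfl))
        fun hab => hhead'.2 (by rw [hab]; rfl)
    · exact D.eq_of_tgt_eq_of_ne hhead.1 hhead'.1 (fun hab => hhead.2 (by rw [hab]; rfl))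
        fun hab => hhead'.2 (by rw [hab]; rfl)
    · exact D.unblocked_right b a a' hhead.1.symm hhead'.1.symm (fun hm => (hrel _ hm).2 ⟨t, rfl⟩)
        fun hm => (hrel' _ hm).2 ⟨t, rfl⟩

variable (D) in
theorem sgn_eq_reverse_map : D.sgn = fun w => (w.map D.sylBit).reverse := by
  funext w
  induction w with
  | nil => rfl
  | cons α t ih => simp [sgn, ih]

theorem ltl_total {x y : List D.Syll} (hne : x ≠ y) : D.ltl x y ∨ D.ltl y x := by
  obtain ⟨w, x', y', rfl, rfl, hlast⟩ := List.exists_longest_common_suffix x y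
  have hlast' : ∀ α, ¬ (y'.getLast? = some α ∧ x'.getLast? = some α) := fun α h => hlast α h.symm
  rcases hx : x'.getLast? with _ | a | a
  · rw [List.getLast?_eq_none_iff] at hx
    subst hx
    rcases hy : y'.getLast? with _ | b | b
    · rw [List.getLast?_eq_none_iff] at hy
      simp [hy] at hne
    · exact Or.inr ⟨w, y', [], rfl, rfl, hlast', Or.inl ⟨b, hy⟩⟩
    · exact Or.inl ⟨w, [], y', rfl, rfl, hlast, Or.inr ⟨b, hy⟩⟩
  · exact Or.inl ⟨w, x', y', rfl, rfl, hlast, Or.inl ⟨a, hx⟩⟩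
  · exact Or.inr ⟨w, y', x', rfl, rfl, hlast', Or.inr ⟨a, hx⟩⟩

theorem inlt_sgn_of_ltl
    (hsrc : ∀ a b, a ≠ b → D.src a = D.src b → sgm a = -sgm b)
    (htgt : ∀ a b, a ≠ b → D.tgt a = D.tgt b → tau a = -tau b)
    {x y : List D.Syll} (hx : D.InHl sgm tau v x) (hy : D.InHl sgm tau v y)
    (h : D.ltl x y) : inlt (D.sgn x) (D.sgn y) := by
  obtain ⟨w, x', y', rfl, rfl, hlast, hdir⟩ := h
  simp only [sgn_eq_reverse_map, List.map_append, List.reverse_append, inlt_append_left_iff]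
  rcases x'.eq_nil_or_concat with rfl | ⟨x', α, rfl⟩ <;>
    rcases y'.eq_nil_or_concat with rfl | ⟨y', β, rfl⟩
  · simp at hdir
  · obtain ⟨b, rfl⟩ : ∃ b, β = Sum.inr b := by simpa using hdir
    simp [inlt, sylBit]
  · obtain ⟨a, rfl⟩ : ∃ a, α = Sum.inl a := by simpa using hdir
    simp [inlt, sylBit]
  · simp only [List.concat_eq_append, List.append_assoc, List.singleton_append] at hx hy
    have hne : α ≠ β := fun h => hlast α (by simp [h])
    have hbit : D.sylBit α ≠ D.sylBit β := fun hbit =>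
      hne (hx.extends_of_append.eq_of_sylBit_eq hsrc htgt hy.extends_of_append hbit)
    rcases α with a | a <;> rcases β with b | b <;> simp_all [inlt, sylBit]

end StringAlgData

theorem hammock_isLinguage_general (D : StringAlgData) (sgm tau : D.A → ℤ)
    (hsrc : ∀ a b, a ≠ b → D.src a = D.src b → sgm a = -sgm b)
    (htgt : ∀ a b, a ≠ b → D.tgt a = D.tgt b → tau a = -tau b)
    (v : D.V) :
    ∃ M : PDFA Bool,
      Nonempty ((fun x y : {w : List D.Syll // D.InHl sgm tau v w} => D.ltl x.1 y.1) ≃r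
        fun x y : M.lang => inlt x.1 y.1) := by
  have hbij := bijOn_isBuilt_lang_windowAutomaton (D.Extends sgm tau v) D.sylBit
    (fun _ _ _ => StringAlgData.Extends.eq_of_sylBit_eq hsrc htgt) (D.extends_take_iff sgm tau v)
  rw [← D.sgn_eq_reverse_map] at hbij
  simp only [← D.inHl_iff_isBuilt] at hbij
  exact ⟨_, hbij.nonempty_relIso (fun x _ y _ => StringAlgData.ltl_total)
    (fun _ _ => inlt_asymm) fun x hx y hy => StringAlgData.inlt_sgn_of_ltl hsrc htgt hx hy⟩

/-- For a string algebra datum with sign maps and a vertex `v`, the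
left hammock linear order `(H_l(v), <_l)` is order-isomorphic to the linguage `𝐋(M)`
of some DFA `M` over `{0,1}`. -/
theorem hammock_isLinguage (D : StringAlgData) (sgm tau : D.A → ℤ)
    (hsgm : ∀ a, sgm a = 1 ∨ sgm a = -1) (htau : ∀ a, tau a = 1 ∨ tau a = -1)
    (hsrc : ∀ a b, a ≠ b → D.src a = D.src b → sgm a = -sgm b)
    (htgt : ∀ a b, a ≠ b → D.tgt a = D.tgt b → tau a = -tau b)
    (hcomp : ∀ a b, D.src a = D.tgt b → [a, b] ∉ D.ρ → sgm a = -tau b)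
    (v : D.V) :
    ∃ M : PDFA Bool,
      Nonempty ((fun x y : {w : List D.Syll // D.InHl sgm tau v w} => D.ltl x.1 y.1) ≃r
        fun x y : M.lang => inlt x.1 y.1) :=
  hammock_isLinguage_general D sgm tau hsrc htgt v
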